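/- arXiv:2308.12254 — 2 statements merged into one kernel-verified Lean document; each statement's English description precedes it below -/
import Mathlib

section
/- Suppose that series s_{ij}(u) = δ_{ij} + Σ_{r≥1} s_{ij}^{(r)} u^{-r} (1 ≤ i,j ≤ N) with coefficients in a unital associative ℂ-algebra satisfy the quaternary relation. Then the single relation s_{11}(u) = s_{11}(−u) is equivalent to the full family of symmetry relations s_{ji}(−u) = s_{ij}(u) + (s_{ij}(u) − s_{ij}(−u))/(2u) for all 1 ≤ i,j ≤ N. -/
noncomputable section

namespace TY

variable {A : Type*} [Ring A] [Algebra ℂ A]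

/-- For `f(u) = Σ_{r≥0} a_r u^{-r}` (recorded as the power series `Σ a_r x^r` in
`x = u⁻¹`), this is the series `f(-u)`. -/
def negVar (f : PowerSeries A) : PowerSeries A :=
  PowerSeries.mk fun n => ((-1 : ℂ) ^ n) • PowerSeries.coeff n f

/-- For `f(u) = Σ_{r≥0} a_r u^{-r}`, this is the series `f(u + c)`, expanded again
in powers of `u⁻¹`. -/
def shiftVar (c : ℂ) (f : PowerSeries A) : PowerSeries A :=
  PowerSeries.mk fun n => ∑ r ∈ Finset.range (n + 1),
    ((-1 : ℂ) ^ (n - r) * ((n - 1).choose (n - r) : ℂ) * c ^ (n - r)) •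
      PowerSeries.coeff r f

open Classical in
/-- A series in the single variable `u⁻¹`, viewed as a two-variable series placed in
the `k`-th variable. -/
def inVar (k : Fin 2) (f : PowerSeries A) : MvPowerSeries (Fin 2) A := fun m =>
  if m = Finsupp.single k (m k) then PowerSeries.coeff (m k) f else 0

/-- `f(u)` as a series in the two variables `x = u⁻¹`, `y = v⁻¹`. -/
abbrev inX (f : PowerSeries A) : MvPowerSeries (Fin 2) A := inVar 0 f

/-- `f(v)` as a series in the two variables `x = u⁻¹`, `y = v⁻¹`. -/
abbrev inY (f : PowerSeries A) : MvPowerSeries (Fin 2) A := inVar 1 f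

/-- `x = u⁻¹` as a two-variable series. -/
def Xv : MvPowerSeries (Fin 2) A := MvPowerSeries.X 0

/-- `y = v⁻¹` as a two-variable series. -/
def Yv : MvPowerSeries (Fin 2) A := MvPowerSeries.X 1

/-- The left-hand side `(u²-v²)[s_{ij}(u), s_{kl}(v)]` of the quaternary relation,
multiplied by `x²y²` (where `x = u⁻¹`, `y = v⁻¹`) to clear negative powers. -/
def quatLHS {N : ℕ} (s : Fin N → Fin N → PowerSeries A) (i j k l : Fin N) :
    MvPowerSeries (Fin 2) A :=
  (Yv ^ 2 - Xv ^ 2) * ⁅inX (s i j), inY (s k l)⁆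

/-- The right-hand side of the quaternary relation, multiplied by `x²y²`. -/
def quatRHS {N : ℕ} (s : Fin N → Fin N → PowerSeries A) (i j k l : Fin N) :
    MvPowerSeries (Fin 2) A :=
  Xv * Yv * (Xv + Yv) * (inX (s k j) * inY (s i l) - inY (s k j) * inX (s i l))
    - Xv * Yv * (Yv - Xv) * (inX (s i k) * inY (s j l) - inY (s k i) * inX (s l j))
    + Xv ^ 2 * Yv ^ 2 * (inX (s k i) * inY (s j l) - inY (s k i) * inX (s j l))

/-- The quaternary relation (2.2). -/
def QuatRel {N : ℕ} (s : Fin N → Fin N → PowerSeries A) : Prop :=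
  ∀ i j k l : Fin N, quatLHS s i j k l = quatRHS s i j k l

/-- `s_{ij}(u) = δ_{ij} + Σ_{r≥1} s_{ij}^{(r)} u^{-r}`. -/
def HasDeltaConst {N : ℕ} (s : Fin N → Fin N → PowerSeries A) : Prop :=
  ∀ i j : Fin N, PowerSeries.constantCoeff (s i j) = if i = j then 1 else 0

/-- The symmetry relation `s_{ji}(-u) = s_{ij}(u) + (s_{ij}(u) - s_{ij}(-u))/(2u)`. -/
def SymRel {N : ℕ} (s : Fin N → Fin N → PowerSeries A) : Prop :=
  ∀ i j : Fin N,
    negVar (s j i)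
      = s i j + (2 : ℂ)⁻¹ • (PowerSeries.X * (s i j - negVar (s i j)))

/-- The upper unitriangular matrix `E(u)` with entries `e_{ij}(u)`, `i < j`. -/
def upperMat {N : ℕ} (e : Fin N → Fin N → PowerSeries A) :
    Matrix (Fin N) (Fin N) (PowerSeries A) :=
  Matrix.of fun i j => if i = j then 1 else if i < j then e i j else 0

/-- The lower unitriangular matrix `F(u)` with entries `f_{ji}(u)`, `i < j`. -/
def lowerMat {N : ℕ} (f : Fin N → Fin N → PowerSeries A) :
    Matrix (Fin N) (Fin N) (PowerSeries A) :=
  Matrix.of fun i j => if i = j then 1 else if j < i then f i j else 0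

/-- The (unique) Gauss decomposition `S(u) = F(u) D(u) E(u)`: `D(u)` diagonal with
entries `d_i(u)` having constant term `1`, `E(u)` upper unitriangular with entries
`e_{ij}(u)` (for `i < j`), `F(u)` lower unitriangular with entries `f_{ji}(u)`. -/
structure IsGaussDecomp {N : ℕ} (s : Fin N → Fin N → PowerSeries A)
    (d : Fin N → PowerSeries A) (e f : Fin N → Fin N → PowerSeries A) : Prop where
  d_const : ∀ i, PowerSeries.constantCoeff (d i) = 1
  e_const : ∀ i j : Fin N, i < j → PowerSeries.constantCoeff (e i j) = 0
  f_const : ∀ i j : Fin N, i < j → PowerSeries.constantCoeff (f j i) = 0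
  decomp : Matrix.of s = lowerMat f * Matrix.diagonal d * upperMat e

/-- `b_{ji}(u) = f_{ji}(u - i/2)`; the indices `j i` here are 0-based, so the paper's
(1-based) index `i` equals `(i : ℕ) + 1`. -/
def bSeriesAt {N : ℕ} (f : Fin N → Fin N → PowerSeries A) (j i : Fin N) :
    PowerSeries A :=
  shiftVar (-(((i : ℕ) : ℂ) + 1) / 2) (f j i)

/-- `h_0(u) = d_1(u)` and, for `k ≥ 1`, `h_k(u) = d̃_k(u - k/2) d_{k+1}(u - k/2)`;
the index `k` here is the paper's index, while the entries of `d`, `dt` are indexed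
0-based (so the paper's `d_m` is `d ⟨m-1⟩`). -/
def hSeriesAt {N : ℕ} (d dt : Fin N → PowerSeries A) (k : Fin N) :
    PowerSeries A :=
  if _h : (k : ℕ) = 0 then d k
  else
    shiftVar (-((k : ℕ) : ℂ) / 2) (dt ⟨(k : ℕ) - 1, by have := k.isLt; omega⟩) *
      shiftVar (-((k : ℕ) : ℂ) / 2) (d k)

/-- The free algebra on the generators `s_{ij}^{(r)}`, `r ≥ 1` (the triple
`(i, j, n)` encodes `s_{ij}^{(n+1)}`). -/
abbrev FA (N : ℕ) := FreeAlgebra ℂ (Fin N × Fin N × ℕ)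

/-- The generating series `s_{ij}(u)` of the free algebra. -/
def sFree (N : ℕ) (i j : Fin N) : PowerSeries (FA N) :=
  PowerSeries.mk fun r =>
    match r with
    | 0 => if i = j then 1 else 0
    | n + 1 => FreeAlgebra.ι ℂ (i, j, n)

/-- The defining relations of the extended twisted Yangian `X_N`: all coefficients
of the quaternary relations. -/
inductive XRel (N : ℕ) : FA N → FA N → Prop
  | quat (i j k l : Fin N) (m : Fin 2 →₀ ℕ) :
      XRel N (MvPowerSeries.coeff m (quatLHS (sFree N) i j k l))
        (MvPowerSeries.coeff m (quatRHS (sFree N) i j k l))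

/-- The extended twisted Yangian `X_N`. -/
abbrev Xt (N : ℕ) := RingQuot (XRel N)

/-- The generating series `s_{ij}(u)` of `X_N`. -/
def sX (N : ℕ) (i j : Fin N) : PowerSeries (Xt N) :=
  PowerSeries.map (RingQuot.mkRingHom (XRel N)) (sFree N i j)

/-- The defining relations of the twisted Yangian `Y_N`: the quaternary relations
together with the symmetry relation `s_{11}(u) = s_{11}(-u)`. -/
inductive YRel (N : ℕ) : FA N → FA N → Prop
  | quat (i j k l : Fin N) (m : Fin 2 →₀ ℕ) :
      YRel N (MvPowerSeries.coeff m (quatLHS (sFree N) i j k l))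
        (MvPowerSeries.coeff m (quatRHS (sFree N) i j k l))
  | symm (h : 0 < N) (n : ℕ) :
      YRel N (PowerSeries.coeff n (sFree N ⟨0, h⟩ ⟨0, h⟩))
        (PowerSeries.coeff n (negVar (sFree N ⟨0, h⟩ ⟨0, h⟩)))

/-- The twisted Yangian `Y_N`. -/
abbrev Yt (N : ℕ) := RingQuot (YRel N)

/-- The generating series `s_{ij}(u)` of `Y_N`. -/
def sY (N : ℕ) (i j : Fin N) : PowerSeries (Yt N) :=
  PowerSeries.map (RingQuot.mkRingHom (YRel N)) (sFree N i j)

/-- `x` is fixed by every (auto)morphism `ν_g : S(u) ↦ g(u) S(u)` of `Y_N`, where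
`g(u) ∈ 1 + u⁻²ℂ[[u⁻²]]`. -/
def SYcond (N : ℕ) (x : Yt N) : Prop :=
  ∀ (φ : Yt N →ₐ[ℂ] Yt N) (g : PowerSeries ℂ),
    PowerSeries.constantCoeff g = 1 →
    (∀ n : ℕ, PowerSeries.coeff (2 * n + 1) g = 0) →
    (∀ i j : Fin N,
      PowerSeries.map (φ : Yt N →+* Yt N) (sY N i j)
        = PowerSeries.map (algebraMap ℂ (Yt N)) g * sY N i j) →
    φ x = x

/-- The special twisted Yangian `SY_N`, as the subalgebra of `Y_N` of elements
stable under all automorphisms `ν_g`. -/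
def specialSubalgebra (N : ℕ) : Subalgebra ℂ (Yt N) where
  carrier := {x | SYcond N x}
  mul_mem' := fun ha hb φ g h1 h2 h3 => by
    rw [map_mul, ha φ g h1 h2 h3, hb φ g h1 h2 h3]
  one_mem' := fun φ _ _ _ _ => map_one φ
  add_mem' := fun ha hb φ g h1 h2 h3 => by
    rw [map_add, ha φ g h1 h2 h3, hb φ g h1 h2 h3]
  zero_mem' := fun φ _ _ _ _ => map_zero φ
  algebraMap_mem' := fun c φ _ _ _ _ => φ.commutes c

/-- `x < y` for an explicitly given linear order. -/
def ltOf {G : Type*} (L : LinearOrder G) (x y : G) : Prop :=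
  L.toPartialOrder.toPreorder.toLT.lt x y

/-- The ordered monomial attached to a finitely supported exponent function `m`,
with the generators multiplied in increasing order relative to the linear order
`L`. -/
def orderedMonomial {R : Type*} [Ring R] {G : Type*} (L : LinearOrder G)
    (elem : G → R) (m : G →₀ ℕ) : R :=
  letI := L
  ((m.support.sort (· ≤ ·)).map fun g => elem g ^ m g).prod

end TY

/-!
Specialising the quaternary relation at `v = -u` kills its left-hand side and, after cancelling
`u⁻³`, leaves
`2(s_ik(u) s_jl(-u) - s_ki(-u) s_lj(u)) = u⁻¹(s_ki(u) s_jl(-u) - s_ki(-u) s_jl(u))`.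
For `j = l = 1`, if `s_11(u) = s_11(-u)` then the invertible factor `s_11` cancels on the right,
so `2(s_ik(u) - s_ki(-u)) = u⁻¹(s_ki(u) - s_ki(-u))`. Adding this to its `(k, i)` twin shows that
`h = s_ik + s_ki - (s_ik + s_ki)(-u)` satisfies `2h = u⁻¹h`, hence `h = 0`; substituting back
gives the symmetry relation. Conversely, the symmetry relation for `i = j = 1` says that
`h = s_11(u) - s_11(-u)` satisfies `h = -(2u)⁻¹ h`, so again `h = 0`.
-/

namespace MvPowerSeries

variable {σ R : Type*} [Ring R]

theorem coeff_add_single_X_mul (m : σ →₀ ℕ) (s : σ) (F : MvPowerSeries σ R) :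
    coeff (m + Finsupp.single s 1) (X s * F) = coeff m F := by
  classical
  rw [X_def, coeff_monomial_mul, if_pos le_add_self, one_mul, add_tsub_cancel_right]

theorem coeff_X_mul_of_apply_eq_zero {m : σ →₀ ℕ} {s : σ} (hm : m s = 0)
    (F : MvPowerSeries σ R) : coeff m (X s * F) = 0 := by
  classical
  rw [X_def, coeff_monomial_mul, if_neg]
  intro h
  simpa [hm] using h s

end MvPowerSeries

namespace PowerSeries

variable {R : Type*} [Ring R]

theorem mul_right_cancel_of_constantCoeff_eq_one {f f' g : PowerSeries R}
    (hg : constantCoeff g = 1) (h : f * g = f' * g) : f = f' :=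
  (isUnit_iff_constantCoeff.2 (hg ▸ isUnit_one)).mul_left_inj.1 h

theorem eq_zero_of_eq_smul_X_mul {S : Type*} [Semiring S] [Module S R] {f : PowerSeries R}
    {c : S} (h : f = c • (X * f)) : f = 0 := by
  ext n
  rw [map_zero]
  induction n with
  | zero => rw [h, coeff_smul, coeff_zero_X_mul, smul_zero]
  | succ n ih => rw [h, coeff_smul, coeff_succ_X_mul, ih, smul_zero]

end PowerSeries

namespace TY

open Finset PowerSeries
open Finsupp (single)

variable {A : Type*} [Ring A]

theorem coeff_inVar (k : Fin 2) (f : PowerSeries A) (m : Fin 2 →₀ ℕ) :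
    MvPowerSeries.coeff m (inVar k f)
      = if m = single k (m k) then coeff (m k) f else 0 := by
  classical
  rfl

theorem coeff_inVar_mul_inVar {k k' : Fin 2} (hk : k ≠ k') (f g : PowerSeries A)
    (m : Fin 2 →₀ ℕ) :
    MvPowerSeries.coeff m (inVar k f * inVar k' g) = coeff (m k) f * coeff (m k') g := by
  classical
  have hm : single k (m k) + single k' (m k') = m := by
    ext i
    fin_cases i <;> fin_cases k <;> fin_cases k' <;> simp_all
  rw [MvPowerSeries.coeff_mul, sum_eq_single_of_mem (single k (m k), single k' (m k'))
    (HasAntidiagonal.mem_antidiagonal.2 hm)]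
  · simp [coeff_inVar]
  · rintro ⟨u, v⟩ huv hne
    rw [coeff_inVar, coeff_inVar]
    split_ifs with hu hv <;> try simp only [zero_mul, mul_zero]
    rw [HasAntidiagonal.mem_antidiagonal] at huv
    generalize u k = a at hu
    generalize v k' = b at hv
    subst hu hv huv
    simp [hk, hk.symm] at hne

variable [Algebra ℂ A]

/-- The specialisation `v = -u` of a series in `x = u⁻¹`, `y = v⁻¹`, i.e. `y ↦ -x`. -/
def evalNeg : MvPowerSeries (Fin 2) A →+ PowerSeries A where
  toFun F := PowerSeries.mk fun n => ∑ p ∈ antidiagonal n,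
    ((-1 : ℂ) ^ p.2) • MvPowerSeries.coeff (single 0 p.1 + single 1 p.2) F
  map_zero' := by ext; simp
  map_add' F G := by ext; simp [sum_add_distrib]

theorem coeff_evalNeg (F : MvPowerSeries (Fin 2) A) (n : ℕ) :
    coeff n (evalNeg F) = ∑ p ∈ antidiagonal n,
      ((-1 : ℂ) ^ p.2) • MvPowerSeries.coeff (single 0 p.1 + single 1 p.2) F := by
  simp [evalNeg]

theorem coeff_negVar (f : PowerSeries A) (n : ℕ) :
    coeff n (negVar f) = ((-1 : ℂ) ^ n) • coeff n f := by
  simp [negVar]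

theorem evalNeg_Xv_mul (F : MvPowerSeries (Fin 2) A) : evalNeg (Xv * F) = X * evalNeg F := by
  ext (_ | n)
  · simp [coeff_evalNeg, Xv, MvPowerSeries.coeff_X_mul_of_apply_eq_zero]
  · rw [coeff_evalNeg, Nat.antidiagonal_succ, sum_cons, sum_map, coeff_succ_X_mul, coeff_evalNeg,
      Xv, MvPowerSeries.coeff_X_mul_of_apply_eq_zero (by simp), smul_zero, zero_add]
    refine sum_congr rfl fun p _ => ?_
    have hm : single 0 (p.1 + 1) + single 1 p.2
        = single 0 p.1 + single 1 p.2 + single (0 : Fin 2) 1 := by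
      rw [Finsupp.single_add]; abel
    simp only [Function.Embedding.coe_prodMap, Prod.map, Function.Embedding.coeFn_mk,
      Function.Embedding.refl_apply, Nat.succ_eq_add_one, hm,
      MvPowerSeries.coeff_add_single_X_mul]

theorem evalNeg_Yv_mul (F : MvPowerSeries (Fin 2) A) : evalNeg (Yv * F) = -(X * evalNeg F) := by
  ext (_ | n)
  · simp [coeff_evalNeg, Yv, MvPowerSeries.coeff_X_mul_of_apply_eq_zero]
  · rw [coeff_evalNeg, Nat.antidiagonal_succ', sum_cons, sum_map, map_neg, coeff_succ_X_mul,
      coeff_evalNeg, Yv, MvPowerSeries.coeff_X_mul_of_apply_eq_zero (by simp), smul_zero, zero_add,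
      ← sum_neg_distrib]
    refine sum_congr rfl fun p _ => ?_
    have hm : single 0 p.1 + single 1 (p.2 + 1)
        = single 0 p.1 + single 1 p.2 + single (1 : Fin 2) 1 := by
      rw [Finsupp.single_add]; abel
    simp only [Function.Embedding.coe_prodMap, Prod.map, Function.Embedding.coeFn_mk,
      Function.Embedding.refl_apply, Nat.succ_eq_add_one, hm,
      MvPowerSeries.coeff_add_single_X_mul, pow_succ, mul_neg_one, neg_smul]

theorem evalNeg_inX_mul_inY (f g : PowerSeries A) : evalNeg (inX f * inY g) = f * negVar g := by
  ext n
  rw [coeff_evalNeg, coeff_mul]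
  refine sum_congr rfl fun p _ => ?_
  simp [coeff_inVar_mul_inVar, coeff_negVar]

theorem evalNeg_inY_mul_inX (f g : PowerSeries A) : evalNeg (inY g * inX f) = negVar g * f := by
  ext n
  rw [coeff_evalNeg, coeff_mul, ← Nat.sum_antidiagonal_swap]
  refine sum_congr rfl fun p _ => ?_
  simp [coeff_inVar_mul_inVar, coeff_negVar]

theorem evalNeg_quatLHS {N : ℕ} (s : Fin N → Fin N → PowerSeries A) (i j k l : Fin N) :
    evalNeg (quatLHS s i j k l) = 0 := by
  simp only [quatLHS, Ring.lie_def, sq, sub_mul, mul_assoc, map_sub, evalNeg_Xv_mul,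
    evalNeg_Yv_mul]
  noncomm_ring

theorem evalNeg_quatRHS {N : ℕ} (s : Fin N → Fin N → PowerSeries A) (i j k l : Fin N) :
    evalNeg (quatRHS s i j k l)
      = X ^ 3 * (X * (s k i * negVar (s j l) - negVar (s k i) * s j l)
          - (2 : ℂ) • (s i k * negVar (s j l) - negVar (s k i) * s l j)) := by
  simp only [quatRHS, sq, mul_add, add_mul, mul_sub, sub_mul, mul_assoc, map_add, map_sub,
    evalNeg_Xv_mul, evalNeg_Yv_mul, evalNeg_inX_mul_inY, evalNeg_inY_mul_inX]
  rw [two_smul]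
  noncomm_ring

variable {N : ℕ} {s : Fin N → Fin N → PowerSeries A}

theorem QuatRel.two_smul_eq_X_mul (hquat : QuatRel s) (i j k l : Fin N) :
    (2 : ℂ) • (s i k * negVar (s j l) - negVar (s k i) * s l j)
      = X * (s k i * negVar (s j l) - negVar (s k i) * s j l) := by
  have h := congrArg evalNeg (hquat i j k l)
  rw [evalNeg_quatLHS, evalNeg_quatRHS, eq_comm, ← mul_zero (X ^ 3 : PowerSeries A)] at h
  exact (sub_eq_zero.1 (X_pow_mul_cancel h)).symm

theorem QuatRel.two_smul_sub_negVar (hquat : QuatRel s) {z : Fin N}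
    (hz : constantCoeff (s z z) = 1) (hzz : s z z = negVar (s z z)) (i k : Fin N) :
    (2 : ℂ) • (s i k - negVar (s k i)) = X * (s k i - negVar (s k i)) := by
  have h := hquat.two_smul_eq_X_mul i z k z
  rw [← hzz, ← sub_mul, ← sub_mul, ← smul_mul_assoc, ← mul_assoc] at h
  exact mul_right_cancel_of_constantCoeff_eq_one hz h

theorem QuatRel.negVar_add_negVar (hquat : QuatRel s) {z : Fin N}
    (hz : constantCoeff (s z z) = 1) (hzz : s z z = negVar (s z z)) (i k : Fin N) :
    negVar (s i k) + negVar (s k i) = s i k + s k i := by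
  have hik := hquat.two_smul_sub_negVar hz hzz i k
  have hki := hquat.two_smul_sub_negVar hz hzz k i
  refine (sub_eq_zero.1 (eq_zero_of_eq_smul_X_mul (c := (2⁻¹ : ℂ)) ?_)).symm
  simp only [mul_sub, mul_add] at hik hki ⊢
  linear_combination (norm := module) (2⁻¹ : ℂ) • (hik + hki)

theorem QuatRel.symRel (hquat : QuatRel s) {z : Fin N} (hz : constantCoeff (s z z) = 1)
    (hzz : s z z = negVar (s z z)) : SymRel s := by
  intro i j
  have hij := hquat.two_smul_sub_negVar hz hzz i j
  have hev := congrArg (X * ·) (hquat.negVar_add_negVar hz hzz i j)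
  simp only [mul_sub, mul_add] at hij hev ⊢
  linear_combination (norm := module) (-2⁻¹ : ℂ) • hij + (2⁻¹ : ℂ) • hev

theorem SymRel.eq_negVar (hsym : SymRel s) (z : Fin N) : s z z = negVar (s z z) :=
  sub_eq_zero.1 <| eq_zero_of_eq_smul_X_mul (c := (-2⁻¹ : ℂ)) <| by
    have h := hsym z z
    linear_combination (norm := module) -h

theorem statement_0 {A : Type*} [Ring A] [Algebra ℂ A] {N : ℕ} (hN : 0 < N)
    (s : Fin N → Fin N → PowerSeries A)
    (hconst : HasDeltaConst s) (hquat : QuatRel s) :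
    s ⟨0, hN⟩ ⟨0, hN⟩ = negVar (s ⟨0, hN⟩ ⟨0, hN⟩) ↔ SymRel s := by
  have hunit : constantCoeff (s ⟨0, hN⟩ ⟨0, hN⟩) = 1 := by simp [hconst _ _]
  exact ⟨hquat.symRel hunit, fun hsym => hsym.eq_negVar _⟩

end TY
end
end

section
/- The automorphism ζ_N of the extended twisted Yangian X_N determined by ζ_N(s_{ij}(u)) = s̃_{i'j'}(−u−N/2) (where i' = N+1−i) satisfies ζ_N(e_{ij}(u)) = f̃_{i'j'}(−u−N/2), ζ_N(f_{ji}(u)) = ẽ_{j'i'}(−u−N/2) for 1 ≤ i < j ≤ N, and ζ_N(d_k(u)) = d̃_{k'}(−u−N/2) for 1 ≤ k ≤ N. In particular, ζ_N(e_i(u)) = −f_{N−i}(−u−N/2) and ζ_N(f_i(u)) = −e_{N−i}(−u−N/2) for 1 ≤ i < N. -/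
noncomputable section

namespace TY

variable {A : Type*} [Ring A] [Algebra ℂ A]

/-!
Applying `ζ` to `S(u) = F(u) D(u) E(u)` gives a Gauss decomposition of `ζ(S(u))`. On the other
side `S̃(u) = E(u)⁻¹ D(u)⁻¹ F(u)⁻¹`; conjugation by the longest permutation `i ↦ i'` exchanges upper
and lower unitriangular matrices, and `f(u) ↦ f(-u - N/2)` is a ring homomorphism of series in
`u⁻¹`, so the hypothesis on `ζ` exhibits a second Gauss decomposition of `ζ(S(u))`. Uniqueness of
the Gauss decomposition matches the factors. For adjacent indices the entry of the inverse of a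
unitriangular matrix is minus the entry of the matrix itself, which gives the last two formulas.
-/

section SubstScalar

open PowerSeries Finset

variable {R S : Type*} [CommRing R] [Ring S] [Algebra R S]

/-- The composite `f ∘ q` of a series over `S` with a scalar series `q`, for `q` without
constant term: then `q ^ r` contributes to the coefficient of `X ^ n` only when `r ≤ n`. -/
def substScalar (q : R⟦X⟧) (f : S⟦X⟧) : S⟦X⟧ :=
  mk fun n => ∑ r ∈ range (n + 1), coeff n (q ^ r) • coeff r f

variable {q : R⟦X⟧}

theorem coeff_pow_eq_zero_of_lt (hq : constantCoeff q = 0) {n r : ℕ} (h : n < r) :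
    coeff n (q ^ r) = 0 := by
  obtain ⟨p, rfl⟩ := X_dvd_iff.mpr hq
  rw [mul_pow, coeff_X_pow_mul', if_neg (by omega)]

theorem coeff_substScalar_of_le (hq : constantCoeff q = 0) (f : S⟦X⟧) {n M : ℕ} (h : n ≤ M) :
    coeff n (substScalar q f) = ∑ r ∈ range (M + 1), coeff n (q ^ r) • coeff r f := by
  rw [substScalar, coeff_mk]
  refine sum_subset (range_subset_range.mpr (by omega)) fun r _ hr => ?_
  rw [coeff_pow_eq_zero_of_lt hq (by simpa using hr), zero_smul]

theorem substScalar_one : substScalar q (1 : S⟦X⟧) = 1 := by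
  ext n
  rw [substScalar, coeff_mk, sum_eq_single 0 (fun r _ hr => by simp [coeff_one, hr]) (by simp)]
  simp [coeff_one]

theorem substScalar_add (f g : S⟦X⟧) :
    substScalar q (f + g) = substScalar q f + substScalar q g := by
  ext n
  simp [substScalar, smul_add, sum_add_distrib]

theorem substScalar_mul (hq : constantCoeff q = 0) (f g : S⟦X⟧) :
    substScalar q (f * g) = substScalar q f * substScalar q g := by
  ext n
  calc coeff n (substScalar q (f * g))
      = ∑ r ∈ range (n + 1), ∑ p ∈ range (r + 1),
          coeff n (q ^ (p + (r - p))) • (coeff p f * coeff (r - p) g) := by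
        simp only [substScalar, coeff_mk, coeff_mul, smul_sum,
          Nat.sum_antidiagonal_eq_sum_range_succ fun i j => coeff i f * coeff j g]
        refine sum_congr rfl fun r _ => sum_congr rfl fun p hp => ?_
        rw [Nat.add_sub_cancel' (by simpa [Nat.lt_succ_iff] using hp)]
    _ = ∑ p ∈ range (n + 1), ∑ s ∈ range (n + 1 - p),
          coeff n (q ^ (p + s)) • (coeff p f * coeff s g) :=
        sum_range_diag_flip (n + 1) fun p s =>
          coeff n (q ^ (p + s)) • (coeff p f * coeff s g)
    _ = ∑ p ∈ range (n + 1), ∑ s ∈ range (n + 1),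
          coeff n (q ^ (p + s)) • (coeff p f * coeff s g) := by
        refine sum_congr rfl fun p _ =>
          sum_subset (range_subset_range.mpr (by omega)) fun s _ hs => ?_
        rw [coeff_pow_eq_zero_of_lt hq (by simp at hs; omega), zero_smul]
    _ = ∑ x ∈ (antidiagonal n : Finset (ℕ × ℕ)),
          (∑ p ∈ range (n + 1), coeff x.1 (q ^ p) • coeff p f) *
            ∑ s ∈ range (n + 1), coeff x.2 (q ^ s) • coeff s g := by
        simp_rw [pow_add, coeff_mul, sum_smul, sum_mul_sum, smul_mul_smul_comm]
        conv_rhs => rw [sum_comm]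
        exact sum_congr rfl fun p _ => sum_comm
    _ = coeff n (substScalar q f * substScalar q g) := by
        rw [coeff_mul]
        refine sum_congr rfl fun x hx => ?_
        have hx := mem_antidiagonal.mp hx
        rw [coeff_substScalar_of_le hq f (by omega : x.1 ≤ n),
          coeff_substScalar_of_le hq g (by omega : x.2 ≤ n)]

def substScalarHom (hq : constantCoeff q = 0) : S⟦X⟧ →+* S⟦X⟧ where
  toFun := substScalar q
  map_one' := substScalar_one
  map_mul' := substScalar_mul hq
  map_zero' := by simpa using substScalar_add (q := q) (0 : S⟦X⟧) 0
  map_add' := substScalar_add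

end SubstScalar

section ReflectShift

open PowerSeries

theorem negVar_eq_substScalar (f : PowerSeries A) :
    negVar f = substScalar (-X : ℂ⟦X⟧) f := by
  have hpow (r : ℕ) : (-X : ℂ⟦X⟧) ^ r = C ((-1) ^ r) * X ^ r := by
    rw [neg_eq_neg_one_mul, mul_pow, ← map_one C, ← map_neg, map_pow]
  ext n
  rw [negVar, substScalar, coeff_mk, coeff_mk,
    Finset.sum_eq_single n
      (fun r _ hr => by rw [hpow, coeff_C_mul_X_pow, if_neg hr.symm, zero_smul]) (by simp),
    hpow, coeff_C_mul_X_pow, if_pos rfl]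

/-- The expansion of `u⁻¹ ↦ (u + c)⁻¹ = x (1 + c x)⁻¹` in `x = u⁻¹`. -/
def shiftSeries (c : ℂ) : ℂ⟦X⟧ := X * rescale (-c) (mk 1)

theorem coeff_shiftSeries_pow (c : ℂ) {n r : ℕ} (h : r ≤ n) :
    coeff n (shiftSeries c ^ r) = (-1) ^ (n - r) * ((n - 1).choose (n - r) : ℂ) * c ^ (n - r) := by
  rw [shiftSeries, mul_pow, ← map_pow, coeff_X_pow_mul', if_pos h, coeff_rescale]
  rcases r with _ | d
  · rcases n with _ | n <;> simp [coeff_one]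
  · obtain ⟨k, rfl⟩ := Nat.exists_eq_add_of_le h
    rw [mk_one_pow_eq_mk_choose_add, coeff_mk, neg_pow, Nat.add_sub_cancel_left,
      show d + 1 + k - 1 = d + k by omega, Nat.choose_symm_add]
    ring

theorem shiftVar_eq_substScalar (c : ℂ) (f : PowerSeries A) :
    shiftVar c f = substScalar (shiftSeries c) f := by
  ext n
  rw [shiftVar, substScalar, coeff_mk, coeff_mk]
  refine Finset.sum_congr rfl fun r hr => ?_
  rw [coeff_shiftSeries_pow c (Nat.lt_succ_iff.mp (Finset.mem_range.mp hr))]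

/-- The substitution `f(u) ↦ f(-u - c)`. -/
def reflectShift (c : ℂ) : PowerSeries A →+* PowerSeries A :=
  (substScalarHom (by simp [shiftSeries] : constantCoeff (shiftSeries c) = 0)).comp
    (substScalarHom (by simp : constantCoeff (-X : ℂ⟦X⟧) = 0))

theorem reflectShift_apply (c : ℂ) (f : PowerSeries A) :
    reflectShift c f = shiftVar c (negVar f) := by
  rw [shiftVar_eq_substScalar, negVar_eq_substScalar]
  rfl

end ReflectShift

section Unitriangular

open Matrix OrderDual

variable {ι α R S : Type*} [LinearOrder α] [Ring R] [Ring S]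

/-- `b = id` gives the upper and `b = toDual` the lower unitriangular matrices. -/
structure IsUnitriangular (M : Matrix ι ι R) (b : ι → α) : Prop where
  blockTriangular : M.BlockTriangular b
  diag_eq_one : ∀ i, M i i = 1

variable {b : ι → α} {M U V : Matrix ι ι R}

theorem IsUnitriangular.map (hM : IsUnitriangular M b) (φ : R →+* S) :
    IsUnitriangular (M.map φ) b :=
  ⟨hM.blockTriangular.map φ, fun i => by simp [hM.diag_eq_one i]⟩

variable [Fintype ι]

theorem IsUnitriangular.mul (hb : b.Injective) (hU : IsUnitriangular U b)
    (hV : IsUnitriangular V b) : IsUnitriangular (U * V) b := by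
  refine ⟨hU.blockTriangular.mul hV.blockTriangular, fun i => ?_⟩
  rw [mul_apply, Finset.sum_eq_single i (fun k _ hk => ?_) (by simp), hU.diag_eq_one,
    hV.diag_eq_one, one_mul]
  rcases lt_or_gt_of_ne (hb.ne hk) with h | h
  · rw [hU.blockTriangular h, zero_mul]
  · rw [hV.blockTriangular h, mul_zero]

variable [DecidableEq ι]

theorem IsUnitriangular.of_mul_eq_one [WellFoundedLT α] (hb : b.Injective)
    (hU : IsUnitriangular U b) (h : V * U = 1) : IsUnitriangular V b := by
  have key : ∀ j i, b j ≤ b i → V i j = (1 : Matrix ι ι R) i j := by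
    intro j
    induction j using (InvImage.wf b wellFounded_lt).induction with
    | _ j ih =>
      intro i hji
      have hij := congrFun (congrFun h i) j
      rwa [mul_apply, Finset.sum_eq_single j (fun k _ hkj => ?_) (by simp), hU.diag_eq_one,
        mul_one] at hij
      rcases lt_or_gt_of_ne (hb.ne hkj) with hk | hk
      · rw [ih k hk i (hk.le.trans hji), one_apply_ne fun hik => (hik ▸ hk).not_ge hji,
          zero_mul]
      · rw [hU.blockTriangular hk, mul_zero]
  exact ⟨fun i j hji => by rw [key j i hji.le, one_apply_ne fun hij => (hij ▸ hji).false],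
    fun i => by rw [key i i le_rfl, one_apply_eq]⟩

theorem IsUnitriangular.apply_eq_neg_of_covBy (hb : b.Injective) (hU : IsUnitriangular U b)
    (hV : IsUnitriangular V b) (h : V * U = 1) {i j : ι} (hij : b i ⋖ b j) :
    V i j = -U i j := by
  have hne : i ≠ j := fun h => hij.lt.ne (congrArg b h)
  have hsum := congrFun (congrFun h i) j
  rw [one_apply_ne hne, mul_apply, ← Finset.sum_subset (Finset.subset_univ {i, j}) ?_,
    Finset.sum_pair hne, hV.diag_eq_one, hU.diag_eq_one, one_mul, mul_one] at hsum
  · exact eq_neg_of_add_eq_zero_right hsum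
  intro k _ hk
  simp only [Finset.mem_insert, Finset.mem_singleton, not_or] at hk
  rcases lt_or_ge (b k) (b i) with hki | hik
  · rw [hV.blockTriangular hki, zero_mul]
  rcases lt_or_ge (b j) (b k) with hjk | hkj
  · rw [hU.blockTriangular hjk, mul_zero]
  exact absurd ((hik.lt_of_ne (hb.ne hk.1).symm)) fun hlt =>
    hij.2 hlt (hkj.lt_of_ne (hb.ne hk.2))

end Unitriangular

section GaussUniqueness

open Matrix OrderDual

variable {ι R S : Type*} [Fintype ι] [LinearOrder ι] [Ring R] [Ring S]

theorem eq_one_of_mul_diagonal_eq_diagonal_mul {W Z : Matrix ι ι R} {d d' : ι → R}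
    (hW : IsUnitriangular W toDual) (hZ : IsUnitriangular Z id) (hd : ∀ i, IsUnit (d i))
    (h : W * diagonal d = diagonal d' * Z) : W = 1 ∧ d = d' ∧ Z = 1 := by
  have entry (i j : ι) : W i j * d j = d' i * Z i j := by
    simpa [mul_diagonal, diagonal_mul] using congrFun (congrFun h i) j
  obtain rfl : d = d' := funext fun i => by
    simpa [hW.diag_eq_one, hZ.diag_eq_one] using entry i i
  refine ⟨?_, rfl, ?_⟩ <;> ext i j <;> rcases lt_trichotomy i j with hij | rfl | hij
  · rw [hW.blockTriangular (toDual_lt_toDual.mpr hij), one_apply_ne hij.ne]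
  · rw [hW.diag_eq_one, one_apply_eq]
  · rw [one_apply_ne hij.ne', ← (hd j).mul_left_eq_zero, entry,
      hZ.blockTriangular (show id j < id i from hij), mul_zero]
  · rw [one_apply_ne hij.ne, ← (hd i).mul_right_eq_zero, ← entry,
      hW.blockTriangular (toDual_lt_toDual.mpr hij), zero_mul]
  · rw [hZ.diag_eq_one, one_apply_eq]
  · rw [hZ.blockTriangular (show id j < id i from hij), one_apply_ne hij.ne']

theorem ldu_unique {L₁ L₂ U₁ U₂ : Matrix ι ι R} {d₁ d₂ : ι → R}
    (hL₁ : IsUnitriangular L₁ toDual) (hL₂ : IsUnitriangular L₂ toDual)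
    (hU₁ : IsUnitriangular U₁ id) (hU₂ : IsUnitriangular U₂ id)
    (hL₂u : IsUnit L₂) (hU₁u : IsUnit U₁) (hd₁ : ∀ i, IsUnit (d₁ i))
    (h : L₁ * diagonal d₁ * U₁ = L₂ * diagonal d₂ * U₂) :
    L₁ = L₂ ∧ d₁ = d₂ ∧ U₁ = U₂ := by
  obtain ⟨L₂', hL₂L₂', hL₂'L₂⟩ := isUnit_iff_exists.mp hL₂u
  obtain ⟨U₁', hU₁U₁', hU₁'U₁⟩ := isUnit_iff_exists.mp hU₁u
  have hL₂' := hL₂.of_mul_eq_one toDual.injective hL₂'L₂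
  have hU₁' := hU₁.of_mul_eq_one Function.injective_id hU₁'U₁
  obtain ⟨hW, hd, hZ⟩ := eq_one_of_mul_diagonal_eq_diagonal_mul
    (hL₂'.mul toDual.injective hL₁) (hU₂.mul Function.injective_id hU₁') hd₁ <| by
      calc L₂' * L₁ * diagonal d₁ = L₂' * (L₁ * diagonal d₁ * U₁) * U₁' := by
            simp only [mul_assoc, hU₁U₁', mul_one]
        _ = diagonal d₂ * (U₂ * U₁') := by
            rw [h]; simp only [← mul_assoc, hL₂'L₂, one_mul]
  refine ⟨?_, hd, ?_⟩
  · calc L₁ = L₂ * (L₂' * L₁) := by rw [← mul_assoc, hL₂L₂', one_mul]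
      _ = L₂ := by rw [hW, mul_one]
  · calc U₁ = U₂ * U₁' * U₁ := by rw [hZ, one_mul]
      _ = U₂ := by rw [mul_assoc, hU₁'U₁, mul_one]

end GaussUniqueness

section Reversal

open Matrix OrderDual

variable {R S : Type*} [Ring R] [Ring S] {n : ℕ}

theorem IsUnitriangular.submatrix_rev_toDual {M : Matrix (Fin n) (Fin n) R}
    (h : IsUnitriangular M id) : IsUnitriangular (M.submatrix Fin.rev Fin.rev) toDual :=
  ⟨fun _ _ hij => h.blockTriangular (Fin.rev_lt_rev.mpr hij), fun _ => h.diag_eq_one _⟩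

theorem IsUnitriangular.submatrix_rev_id {M : Matrix (Fin n) (Fin n) R}
    (h : IsUnitriangular M toDual) : IsUnitriangular (M.submatrix Fin.rev Fin.rev) id :=
  ⟨fun _ _ hij => h.blockTriangular (Fin.rev_lt_rev.mpr hij), fun _ => h.diag_eq_one _⟩

theorem ldu_factors_of_map_eq_map_rev_inv {L U Lt Ut St : Matrix (Fin n) (Fin n) R}
    {d dt : Fin n → R} (φ ψ : R →+* S)
    (hL : IsUnitriangular L toDual) (hU : IsUnitriangular U id)
    (hLtL : Lt * L = 1) (hLLt : L * Lt = 1) (hUtU : Ut * U = 1) (hUUt : U * Ut = 1)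
    (hd : ∀ k, d k * dt k = 1 ∧ dt k * d k = 1)
    (hSt : St * (L * diagonal d * U) = 1)
    (h : (L * diagonal d * U).map φ = (St.submatrix Fin.rev Fin.rev).map ψ) :
    (∀ i j, φ (L i j) = ψ (Ut i.rev j.rev)) ∧ (∀ k, φ (d k) = ψ (dt k.rev)) ∧
      ∀ i j, φ (U i j) = ψ (Lt i.rev j.rev) := by
  let Ψ : Matrix (Fin n) (Fin n) R →+* Matrix (Fin n) (Fin n) S :=
    ψ.mapMatrix.comp (reindexRingEquiv R Fin.revPerm).toRingHom
  have hΨ (M : Matrix (Fin n) (Fin n) R) : Ψ M = (M.submatrix Fin.rev Fin.rev).map ψ := rfl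
  have hSt' : St = Ut * diagonal dt * Lt := by
    refine left_inv_eq_right_inv hSt ?_
    calc L * diagonal d * U * (Ut * diagonal dt * Lt)
        = L * (diagonal d * (U * Ut) * diagonal dt) * Lt := by simp only [mul_assoc]
      _ = 1 := by
        rw [hUUt, mul_one, diagonal_mul_diagonal, funext fun k => (hd k).1, diagonal_one,
          mul_one, hLLt]
  obtain ⟨hL', hd', hU'⟩ := ldu_unique (d₁ := fun k => φ (d k)) (d₂ := fun k => ψ (dt k.rev))
    (hL.map φ) ((hU.of_mul_eq_one Function.injective_id hUtU).submatrix_rev_toDual.map ψ)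
    (hU.map φ) ((hL.of_mul_eq_one toDual.injective hLtL).submatrix_rev_id.map ψ)
    ((isUnit_iff_exists.mpr ⟨U, hUtU, hUUt⟩).map Ψ)
    ((isUnit_iff_exists.mpr ⟨Ut, hUUt, hUtU⟩).map φ.mapMatrix)
    (fun k => (isUnit_iff_exists.mpr ⟨dt k, hd k⟩).map φ) <| by
      calc L.map φ * diagonal (fun k => φ (d k)) * U.map φ = Ψ St := by
            rw [hΨ, ← h, Matrix.map_mul, Matrix.map_mul, diagonal_map (map_zero φ)]
        _ = Ψ Ut * diagonal (fun k => ψ (dt k.rev)) * Ψ Lt := by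
            rw [hSt', map_mul, map_mul, hΨ (diagonal dt),
              submatrix_diagonal dt Fin.rev Fin.rev_injective, diagonal_map (map_zero ψ)]
            rfl
  exact ⟨fun i j => congrFun (congrFun hL' i) j, congrFun hd',
    fun i j => congrFun (congrFun hU' i) j⟩

end Reversal

section GaussFactors

open OrderDual

theorem upperMat_isUnitriangular {A : Type*} [Ring A] [Algebra ℂ A] {N : ℕ}
    (e : Fin N → Fin N → PowerSeries A) :
    IsUnitriangular (upperMat e) id :=
  ⟨fun i j (hji : j < i) => by simp [upperMat, hji.ne', hji.not_gt], fun i => by simp [upperMat]⟩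

theorem lowerMat_isUnitriangular {A : Type*} [Ring A] [Algebra ℂ A] {N : ℕ}
    (f : Fin N → Fin N → PowerSeries A) :
    IsUnitriangular (lowerMat f) toDual :=
  ⟨fun i j (hij : toDual j < toDual i) => by
    simp [lowerMat, (toDual_lt_toDual.mp hij).ne, (toDual_lt_toDual.mp hij).not_gt],
    fun i => by simp [lowerMat]⟩

theorem upperMat_apply_of_lt {A : Type*} [Ring A] [Algebra ℂ A] {N : ℕ}
    (e : Fin N → Fin N → PowerSeries A) {i j : Fin N} (h : i < j) :
    upperMat e i j = e i j := by
  simp [upperMat, h.ne, h]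

theorem lowerMat_apply_of_lt {A : Type*} [Ring A] [Algebra ℂ A] {N : ℕ}
    (f : Fin N → Fin N → PowerSeries A) {i j : Fin N} (h : j < i) :
    lowerMat f i j = f i j := by
  simp [lowerMat, h.ne', h]

end GaussFactors

theorem statement_6 {A : Type*} [Ring A] [Algebra ℂ A] {N : ℕ}
    (s : Fin N → Fin N → PowerSeries A)
    (d : Fin N → PowerSeries A) (e f : Fin N → Fin N → PowerSeries A)
    (hG : IsGaussDecomp s d e f)
    (St Et Ft : Matrix (Fin N) (Fin N) (PowerSeries A))
    (hSt2 : St * Matrix.of s = 1)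
    (hEt1 : upperMat e * Et = 1) (hEt2 : Et * upperMat e = 1)
    (hFt1 : lowerMat f * Ft = 1) (hFt2 : Ft * lowerMat f = 1)
    (dt : Fin N → PowerSeries A)
    (hdt : ∀ k, d k * dt k = 1 ∧ dt k * d k = 1)
    (ζ : A →ₐ[ℂ] A)
    (hζ : ∀ i j : Fin N,
      PowerSeries.map (ζ : A →+* A) (s i j)
        = shiftVar ((N : ℂ) / 2) (negVar (St i.rev j.rev))) :
    (∀ i j : Fin N, i < j →
        PowerSeries.map (ζ : A →+* A) (e i j)
          = shiftVar ((N : ℂ) / 2) (negVar (Ft i.rev j.rev)))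
    ∧ (∀ i j : Fin N, i < j →
        PowerSeries.map (ζ : A →+* A) (f j i)
          = shiftVar ((N : ℂ) / 2) (negVar (Et j.rev i.rev)))
    ∧ (∀ k : Fin N,
        PowerSeries.map (ζ : A →+* A) (d k)
          = shiftVar ((N : ℂ) / 2) (negVar (dt k.rev)))
    ∧ (∀ (k : ℕ) (hk : k + 1 < N),
        PowerSeries.map (ζ : A →+* A) (e ⟨k, by omega⟩ ⟨k + 1, hk⟩)
          = -shiftVar ((N : ℂ) / 2)
              (negVar (f ⟨N - k - 1, by omega⟩ ⟨N - k - 2, by omega⟩)))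
    ∧ (∀ (k : ℕ) (hk : k + 1 < N),
        PowerSeries.map (ζ : A →+* A) (f ⟨k + 1, hk⟩ ⟨k, by omega⟩)
          = -shiftVar ((N : ℂ) / 2)
              (negVar (e ⟨N - k - 2, by omega⟩ ⟨N - k - 1, by omega⟩))) := by
  simp only [← reflectShift_apply] at hζ ⊢
  obtain ⟨hF, hD, hE⟩ := ldu_factors_of_map_eq_map_rev_inv
    (PowerSeries.map (ζ : A →+* A)) (reflectShift ((N : ℂ) / 2))
    (lowerMat_isUnitriangular f) (upperMat_isUnitriangular e) hFt2 hFt1 hEt2 hEt1 hdt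
    (hG.decomp ▸ hSt2) (by ext i j; simp [← hG.decomp, hζ])
  have hEt := (upperMat_isUnitriangular e).of_mul_eq_one Function.injective_id hEt2
  have hFt := (lowerMat_isUnitriangular f).of_mul_eq_one OrderDual.toDual.injective hFt2
  refine ⟨fun i j hij => ?_, fun i j hij => ?_, hD, fun k hk => ?_, fun k hk => ?_⟩
  · rw [← upperMat_apply_of_lt e hij, hE]
  · rw [← lowerMat_apply_of_lt f hij, hF]
  all_goals
    have hrev₀ : (⟨k, by omega⟩ : Fin N).rev = ⟨N - k - 1, by omega⟩ := Fin.ext (by simp; omega)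
    have hrev₁ : (⟨k + 1, hk⟩ : Fin N).rev = ⟨N - k - 2, by omega⟩ := Fin.ext (by simp; omega)
    have hcov : (⟨N - k - 2, by omega⟩ : Fin N) ⋖ ⟨N - k - 1, by omega⟩ :=
      Fin.covBy_iff.mpr (Nat.covBy_iff_add_one_eq.mpr (by simp; omega))
    have hlt : (⟨k, by omega⟩ : Fin N) < ⟨k + 1, hk⟩ := Fin.mk_lt_mk.mpr k.lt_succ_self
  · rw [← upperMat_apply_of_lt e hlt, hE, hrev₀, hrev₁,
      (lowerMat_isUnitriangular f).apply_eq_neg_of_covBy OrderDual.toDual.injective hFt hFt2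
        hcov.toDual,
      map_neg, lowerMat_apply_of_lt f hcov.lt]
  · rw [← lowerMat_apply_of_lt f hlt, hF, hrev₀, hrev₁,
      (upperMat_isUnitriangular e).apply_eq_neg_of_covBy Function.injective_id hEt hEt2 hcov,
      map_neg, upperMat_apply_of_lt e hcov.lt]

end TY
end
end
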